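/- arXiv:1006.1841 — 4 statements merged into one kernel-verified Lean document; each statement's English description precedes it below -/
import Mathlib

section
/- Let f : Ω → ℝ be a nonvanishing real-valued C² function on an open set Ω ⊆ ℝ², and set q = Δf/f. Then for every real-valued C² function φ on Ω one has V₁(V̄φ) = ¼(Δ − q)φ and V̄₁(Vφ) = ¼(Δ − q)φ, where V, V̄, V₁, V̄₁ are the Vekua-type operators built from f. -/
noncomputable section

/-- Points of the plane ℝ². -/
abbrev P2 := EuclideanSpace ℝ (Fin 2)

/-- Partial derivatives ∂ₓ, ∂_y of a complex-valued function on the plane. -/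
def pdx (F : P2 → ℂ) : P2 → ℂ := fun p => fderiv ℝ F p (EuclideanSpace.single 0 1)
def pdy (F : P2 → ℂ) : P2 → ℂ := fun p => fderiv ℝ F p (EuclideanSpace.single 1 1)

/-- ∂_z = ½(∂ₓ − i∂_y). -/
def dz (F : P2 → ℂ) : P2 → ℂ := fun p => (pdx F p - Complex.I * pdy F p) / 2

/-- ∂_z̄ = ½(∂ₓ + i∂_y). -/
def dzbar (F : P2 → ℂ) : P2 → ℂ := fun p => (pdx F p + Complex.I * pdy F p) / 2

/-- The Laplacian Δ = ∂ₓ² + ∂_y². -/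
def lap2 (F : P2 → ℂ) : P2 → ℂ := fun p => pdx (pdx F) p + pdy (pdy F) p

/-- V = ∂_z̄ − (∂_z̄ f/f) C. -/
def Vop (f W : P2 → ℂ) : P2 → ℂ :=
  fun p => dzbar W p - (dzbar f p / f p) * (starRingEnd ℂ) (W p)

/-- V̄ = ∂_z − (∂_z f/f) C. -/
def Vbarop (f W : P2 → ℂ) : P2 → ℂ :=
  fun p => dz W p - (dz f p / f p) * (starRingEnd ℂ) (W p)

/-- V₁ = ∂_z̄ + (∂_z f/f) C. -/
def V1op (f W : P2 → ℂ) : P2 → ℂ :=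
  fun p => dzbar W p + (dz f p / f p) * (starRingEnd ℂ) (W p)

/-- V̄₁ = ∂_z + (∂_z̄ f/f) C. -/
def Vbar1op (f W : P2 → ℂ) : P2 → ℂ :=
  fun p => dz W p + (dzbar f p / f p) * (starRingEnd ℂ) (W p)

/-!
Since `φ` is real, `V̄φ = ∂_z φ − (∂_z f / f) φ` and `C(V̄φ) = ∂_z̄ φ − (∂_z̄ f / f) φ`. Applying
`∂_z̄` to `V̄φ` by the Leibniz rule, the terms in `∂_z̄ φ` and in `∂_z f ∂_z̄ f / f²` cancel against
`(∂_z f / f) C(V̄φ)`, and `∂_z̄ ∂_z = Δ/4` by symmetry of the second derivative, leaving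
`¼(Δφ − (Δf/f) φ)`. For real `f`, conjugation exchanges `∂_z` and `∂_z̄`, so `Vφ = C(V̄φ)` and
`V̄₁ C = C V₁`: the second factorization is the conjugate of the first, whose right side is real.
-/

open ComplexConjugate

section Wirtinger

variable {F G : P2 → ℂ} {p : P2}

theorem dzbar_sub (hF : DifferentiableAt ℝ F p) (hG : DifferentiableAt ℝ G p) :
    dzbar (fun x => F x - G x) p = dzbar F p - dzbar G p := by
  simp only [dzbar, pdx, pdy, fderiv_fun_sub hF hG, sub_apply]
  ring

theorem dzbar_mul (hF : DifferentiableAt ℝ F p) (hG : DifferentiableAt ℝ G p) :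
    dzbar (fun x => F x * G x) p = dzbar F p * G p + F p * dzbar G p := by
  simp only [dzbar, pdx, pdy, fderiv_fun_mul hF hG, add_apply, smul_apply, smul_eq_mul]
  ring

theorem dzbar_inv (hF : DifferentiableAt ℝ F p) (hF0 : F p ≠ 0) :
    dzbar (fun x => (F x)⁻¹) p = -dzbar F p / F p ^ 2 := by
  have h : HasFDerivAt (fun x => (F x)⁻¹) _ p := (hasFDerivAt_inv' hF0).comp p hF.hasFDerivAt
  simp only [dzbar, pdx, pdy, h.fderiv, ContinuousLinearMap.comp_apply, neg_apply,
    ContinuousLinearMap.mulLeftRight_apply]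
  field_simp
  ring

theorem dzbar_div (hF : DifferentiableAt ℝ F p) (hG : DifferentiableAt ℝ G p) (hG0 : G p ≠ 0) :
    dzbar (fun x => F x / G x) p = (dzbar F p * G p - F p * dzbar G p) / G p ^ 2 := by
  simp only [div_eq_mul_inv]
  rw [dzbar_mul hF (hG.fun_inv hG0), dzbar_inv hG hG0]
  field_simp
  ring

theorem fderiv_conj_apply (v : P2) :
    fderiv ℝ (fun x => conj (F x)) p v = conj (fderiv ℝ F p v) :=
  congrArg (· v) (Complex.conjCLE.comp_fderiv (f := F) (x := p))

theorem dz_conj : dz (fun x => conj (F x)) p = conj (dzbar F p) := by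
  simp only [dz, dzbar, pdx, pdy, fderiv_conj_apply, map_div₀, map_add, map_mul, Complex.conj_I,
    map_ofNat]
  ring

theorem conj_fderiv_apply_of_real (hF : ∀ x, conj (F x) = F x) (v : P2) :
    conj (fderiv ℝ F p v) = fderiv ℝ F p v := by
  simp only [← fderiv_conj_apply, hF]

theorem conj_dz_of_real (hF : ∀ x, conj (F x) = F x) : conj (dz F p) = dzbar F p := by
  simp only [dz, dzbar, pdx, pdy, map_div₀, map_sub, map_mul, conj_fderiv_apply_of_real hF,
    Complex.conj_I, map_ofNat]
  ring

theorem conj_lap2_of_real (hF : ∀ x, conj (F x) = F x) : conj (lap2 F p) = lap2 F p := by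
  have hFx : ∀ x, conj (pdx F x) = pdx F x := fun x => conj_fderiv_apply_of_real hF _
  have hFy : ∀ x, conj (pdy F x) = pdy F x := fun x => conj_fderiv_apply_of_real hF _
  simp only [lap2, map_add, pdx, pdy, conj_fderiv_apply_of_real hFx, conj_fderiv_apply_of_real hFy]

theorem hasFDerivAt_fderiv_apply (hF : ContDiffAt ℝ 2 F p) (w : P2) :
    HasFDerivAt (fun x => fderiv ℝ F x w) ((fderiv ℝ (fderiv ℝ F) p).flip w) p := by
  have hDF : DifferentiableAt ℝ (fderiv ℝ F) p :=
    (hF.fderiv_right (m := 1) (by norm_num)).differentiableAt one_ne_zero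
  simpa using hDF.hasFDerivAt.clm_apply (hasFDerivAt_const w p)

theorem hasFDerivAt_dz (hF : ContDiffAt ℝ 2 F p) :
    HasFDerivAt (dz F) ((2⁻¹ : ℂ) • ((fderiv ℝ (fderiv ℝ F) p).flip (EuclideanSpace.single 0 1)
      - Complex.I • (fderiv ℝ (fderiv ℝ F) p).flip (EuclideanSpace.single 1 1))) p := by
  have hdz : dz F = fun x => (pdx F x - Complex.I * pdy F x) * 2⁻¹ := by
    funext x
    rw [dz, div_eq_mul_inv]
  rw [hdz]
  exact ((hasFDerivAt_fderiv_apply hF _).sub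
    ((hasFDerivAt_fderiv_apply hF _).const_mul Complex.I)).mul_const _

theorem dzbar_dz (hF : ContDiffAt ℝ 2 F p) : dzbar (dz F) p = lap2 F p / 4 := by
  have hsymm := hF.isSymmSndFDerivAt (by simp [minSmoothness_of_isRCLikeNormedField])
  have hx : HasFDerivAt (pdx F) _ p := hasFDerivAt_fderiv_apply hF _
  have hy : HasFDerivAt (pdy F) _ p := hasFDerivAt_fderiv_apply hF _
  simp only [dzbar, lap2, pdx, pdy, (hasFDerivAt_dz hF).fderiv, hx.fderiv, hy.fderiv,
    smul_apply, sub_apply, ContinuousLinearMap.flip_apply, smul_eq_mul,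
    hsymm.eq (EuclideanSpace.single 1 1)]
  linear_combination
    (-fderiv ℝ (fderiv ℝ F) p (EuclideanSpace.single 1 1) (EuclideanSpace.single 1 1) / 4) *
      Complex.I_sq

end Wirtinger

section Vekua

variable {F Φ W : P2 → ℂ} {p : P2}

theorem V1op_Vbarop_of_real (hF : ContDiffAt ℝ 2 F p) (hΦ : ContDiffAt ℝ 2 Φ p) (hF0 : F p ≠ 0)
    (hFr : ∀ x, conj (F x) = F x) (hΦr : ∀ x, conj (Φ x) = Φ x) :
    V1op F (Vbarop F Φ) p = (lap2 Φ p - lap2 F p / F p * Φ p) / 4 := by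
  have hV : Vbarop F Φ = fun x => dz Φ x - dz F x / F x * Φ x := by
    funext x
    simp only [Vbarop, hΦr]
  have hdF := hF.differentiableAt two_ne_zero
  have hdΦ := hΦ.differentiableAt two_ne_zero
  have hdzF := (hasFDerivAt_dz hF).differentiableAt
  have hdq : DifferentiableAt ℝ (fun x => dz F x / F x) p := by
    simpa only [div_eq_mul_inv] using hdzF.fun_mul (hdF.fun_inv hF0)
  rw [V1op, hV, dzbar_sub (hasFDerivAt_dz hΦ).differentiableAt (hdq.fun_mul hdΦ),
    dzbar_mul hdq hdΦ, dzbar_div hdzF hdF hF0, dzbar_dz hF, dzbar_dz hΦ]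
  simp only [map_sub, map_mul, map_div₀, conj_dz_of_real hFr, conj_dz_of_real hΦr, hFr, hΦr]
  field_simp
  ring

theorem Vop_eq_conj_Vbarop (hFr : ∀ x, conj (F x) = F x) (hΦr : ∀ x, conj (Φ x) = Φ x) :
    Vop F Φ = fun x => conj (Vbarop F Φ x) := by
  funext x
  simp only [Vop, Vbarop, map_sub, map_mul, map_div₀, conj_dz_of_real hFr, conj_dz_of_real hΦr,
    hFr, hΦr]

theorem Vbar1op_conj (hFr : ∀ x, conj (F x) = F x) :
    Vbar1op F (fun x => conj (W x)) p = conj (V1op F W p) := by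
  simp only [Vbar1op, V1op, dz_conj, map_add, map_mul, map_div₀, conj_dz_of_real hFr, hFr,
    Complex.conj_conj]

theorem Vbar1op_Vop_of_real (hF : ContDiffAt ℝ 2 F p) (hΦ : ContDiffAt ℝ 2 Φ p) (hF0 : F p ≠ 0)
    (hFr : ∀ x, conj (F x) = F x) (hΦr : ∀ x, conj (Φ x) = Φ x) :
    Vbar1op F (Vop F Φ) p = (lap2 Φ p - lap2 F p / F p * Φ p) / 4 := by
  rw [Vop_eq_conj_Vbarop hFr hΦr, Vbar1op_conj hFr, V1op_Vbarop_of_real hF hΦ hF0 hFr hΦr]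
  simp only [map_div₀, map_sub, map_mul, conj_lap2_of_real hFr, conj_lap2_of_real hΦr, hFr, hΦr,
    map_ofNat]

end Vekua

/-- factorization of the stationary Schrödinger operator,
    ¼(Δ − q)φ = V₁V̄φ = V̄₁Vφ with q = Δf/f. -/
theorem statement0 (Ω : Set P2) (hΩ : IsOpen Ω)
    (f : P2 → ℝ) (hf : ContDiffOn ℝ 2 f Ω) (hf0 : ∀ p ∈ Ω, f p ≠ 0)
    (φ : P2 → ℝ) (hφ : ContDiffOn ℝ 2 φ Ω) :
    ∀ p ∈ Ω,
      V1op (fun x => (f x : ℂ)) (Vbarop (fun x => (f x : ℂ)) (fun x => (φ x : ℂ))) p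
        = (lap2 (fun x => (φ x : ℂ)) p
            - (lap2 (fun x => (f x : ℂ)) p / (f p : ℂ)) * (φ p : ℂ)) / 4 ∧
      Vbar1op (fun x => (f x : ℂ)) (Vop (fun x => (f x : ℂ)) (fun x => (φ x : ℂ))) p
        = (lap2 (fun x => (φ x : ℂ)) p
            - (lap2 (fun x => (f x : ℂ)) p / (f p : ℂ)) * (φ p : ℂ)) / 4 := by
  intro p hp
  have hC2 : ∀ g : P2 → ℝ, ContDiffOn ℝ 2 g Ω → ContDiffAt ℝ 2 (fun x => (g x : ℂ)) p :=
    fun g hg => Complex.ofRealCLM.contDiff.contDiffAt.comp p (hg.contDiffAt (hΩ.mem_nhds hp))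
  have hreal : ∀ g : P2 → ℝ, ∀ x, conj (g x : ℂ) = g x := fun g x => Complex.conj_ofReal _
  have hf0' : (f p : ℂ) ≠ 0 := Complex.ofReal_ne_zero.2 (hf0 p hp)
  exact ⟨V1op_Vbarop_of_real (hC2 f hf) (hC2 φ hφ) hf0' (hreal f) (hreal φ),
    Vbar1op_Vop_of_real (hC2 f hf) (hC2 φ hφ) hf0' (hreal f) (hreal φ)⟩
end
end

section
/- Let f : Ω → ℝ be a nonvanishing real-valued C² function on an open set Ω ⊆ ℝ², set q = Δf/f and r = 2((∂_x f)² + (∂_y f)²)/f² − q. Let W₁ be a real-valued C² solution of (−Δ + q)W₁ = 0 on Ω, and let W₂ be a real-valued C² function satisfying ∂_z̄(fW₂) = i f² ∂_z̄(f⁻¹W₁) on Ω. Then W = W₁ + iW₂ satisfies the Vekua equation VW = 0, and consequently W₂ satisfies (−Δ + r)W₂ = 0. -/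
noncomputable section

/-! Put `u = f W₂` and `v = W₁ / f`. Since `u` and `v` are real, the hypothesis
`∂_z̄ u = i f² ∂_z̄ v` is the real first-order system `u_x = -f² v_y`, `u_y = f² v_x`.
Expanding `u` and `v` by the product and quotient rules, its two equations are the real and
imaginary parts of `2 f · VW = 0`. Differentiating the system once more, the mixed derivatives
of `v` cancel, so `div (f⁻² ∇u) = 0`; expanding `Δ (f W₂)` by the Leibniz rule turns this
into `(-Δ + r) W₂ = 0`. -/

open Complex Filter Topology

section PartialDeriv

variable {E F : Type*} [NormedAddCommGroup E] [NormedSpace ℝ E] [NormedAddCommGroup F]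
  [NormedSpace ℝ F]

def partialDeriv (a : E) (g : E → F) : E → F :=
  fun p => fderiv ℝ g p a

variable {a b : E} {p : E}

theorem partialDeriv_add {g h : E → F} (hg : DifferentiableAt ℝ g p)
    (hh : DifferentiableAt ℝ h p) :
    partialDeriv a (fun x => g x + h x) p = partialDeriv a g p + partialDeriv a h p := by
  simp [partialDeriv, fderiv_fun_add hg hh]

theorem partialDeriv_neg (a : E) (g : E → F) (p : E) :
    partialDeriv a (fun x => -g x) p = -partialDeriv a g p := by
  simp [partialDeriv, fderiv_fun_neg]

theorem Filter.EventuallyEq.partialDeriv_eq {g h : E → F} (hgh : g =ᶠ[𝓝 p] h) :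
    partialDeriv a g p = partialDeriv a h p := by
  simp [partialDeriv, hgh.fderiv_eq]

-- Where `g` is not differentiable, neither is its complexification, and both sides are `0`.
theorem partialDeriv_ofReal (a : E) (g : E → ℝ) :
    partialDeriv a (fun x => (g x : ℂ)) = fun p => ((partialDeriv a g p : ℝ) : ℂ) := by
  funext p
  by_cases hg : DifferentiableAt ℝ g p
  · have hcomp : HasFDerivAt (fun x => (g x : ℂ)) (ofRealCLM.comp (fderiv ℝ g p)) p :=
      ofRealCLM.hasFDerivAt.comp p hg.hasFDerivAt
    simp [partialDeriv, hcomp.fderiv]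
  · have hg' : ¬DifferentiableAt ℝ (fun x => (g x : ℂ)) p := fun h =>
      hg (by simpa [Function.comp_def] using reCLM.differentiableAt.comp p h)
    simp [partialDeriv, fderiv_zero_of_not_differentiableAt hg,
      fderiv_zero_of_not_differentiableAt hg']

variable {g h : E → ℝ}

theorem partialDeriv_ofReal_add_I_mul (hg : DifferentiableAt ℝ g p)
    (hh : DifferentiableAt ℝ h p) :
    partialDeriv a (fun x => (g x : ℂ) + I * (h x : ℂ)) p
      = partialDeriv a g p + I * partialDeriv a h p := by
  have hg' : DifferentiableAt ℝ (fun x => (g x : ℂ)) p := ofRealCLM.differentiableAt.comp p hg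
  have hh' : DifferentiableAt ℝ (fun x => (h x : ℂ)) p := ofRealCLM.differentiableAt.comp p hh
  have key := congrFun (partialDeriv_ofReal a g) p
  have key' := congrFun (partialDeriv_ofReal a h) p
  simp only [partialDeriv] at key key' ⊢
  rw [fderiv_fun_add hg' (hh'.const_mul I), fderiv_const_mul hh']
  simp [key, key']

theorem partialDeriv_mul (hg : DifferentiableAt ℝ g p) (hh : DifferentiableAt ℝ h p) :
    partialDeriv a (fun x => g x * h x) p
      = partialDeriv a g p * h p + g p * partialDeriv a h p := by
  simp only [partialDeriv, fderiv_fun_mul hg hh, add_apply,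
    smul_apply, smul_eq_mul]
  ring

theorem partialDeriv_div (hg : DifferentiableAt ℝ g p) (hh : DifferentiableAt ℝ h p)
    (hp : h p ≠ 0) :
    partialDeriv a (fun x => g x / h x) p
      = (partialDeriv a g p * h p - g p * partialDeriv a h p) / h p ^ 2 := by
  have hinv : HasFDerivAt (fun x => (h x)⁻¹)
      ((ContinuousLinearMap.toSpanSingleton ℝ (-(h p ^ 2)⁻¹)).comp (fderiv ℝ h p)) p :=
    (hasFDerivAt_inv hp).comp p hh.hasFDerivAt
  simp only [div_eq_mul_inv]
  rw [partialDeriv_mul (h := fun x => (h x)⁻¹) hg hinv.differentiableAt]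
  simp only [partialDeriv, hinv.fderiv, ContinuousLinearMap.comp_apply,
    ContinuousLinearMap.toSpanSingleton_apply, smul_eq_mul, mul_neg]
  field_simp
  ring

theorem ContDiffAt.differentiableAt_partialDeriv (hg : ContDiffAt ℝ 2 g p) :
    DifferentiableAt ℝ (partialDeriv a g) p :=
  ((hg.fderiv_right (m := 1) le_rfl).differentiableAt one_ne_zero).clm_apply
    (differentiableAt_const a)

theorem ContDiffAt.partialDeriv_comm (hg : ContDiffAt ℝ 2 g p) :
    partialDeriv a (partialDeriv b g) p = partialDeriv b (partialDeriv a g) p := by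
  have hd : DifferentiableAt ℝ (fderiv ℝ g) p :=
    (hg.fderiv_right (m := 1) le_rfl).differentiableAt one_ne_zero
  change fderiv ℝ (fun q => fderiv ℝ g q b) p a = fderiv ℝ (fun q => fderiv ℝ g q a) p b
  rw [fderiv_clm_apply hd (differentiableAt_const _),
    fderiv_clm_apply hd (differentiableAt_const _)]
  simpa using hg.isSymmSndFDerivAt (by simp [minSmoothness_of_isRCLikeNormedField]) a b

theorem partialDeriv_partialDeriv_mul (hg : ContDiffAt ℝ 2 g p) (hh : ContDiffAt ℝ 2 h p) :
    partialDeriv a (partialDeriv a fun x => g x * h x) p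
      = partialDeriv a (partialDeriv a g) p * h p + 2 * partialDeriv a g p * partialDeriv a h p
        + g p * partialDeriv a (partialDeriv a h) p := by
  have hprod : partialDeriv a (fun x => g x * h x) =ᶠ[𝓝 p]
      fun q => partialDeriv a g q * h q + g q * partialDeriv a h q := by
    filter_upwards [hg.eventually (by simp), hh.eventually (by simp)] with q hgq hhq
    exact partialDeriv_mul (hgq.differentiableAt two_ne_zero) (hhq.differentiableAt two_ne_zero)
  have hg1 := hg.differentiableAt two_ne_zero
  have hh1 := hh.differentiableAt two_ne_zero
  rw [hprod.partialDeriv_eq,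
    partialDeriv_add (g := fun q => partialDeriv a g q * h q)
      (h := fun q => g q * partialDeriv a h q) (hg.differentiableAt_partialDeriv.mul hh1)
      (hg1.mul hh.differentiableAt_partialDeriv),
    partialDeriv_mul hg.differentiableAt_partialDeriv hh1,
    partialDeriv_mul hg1 hh.differentiableAt_partialDeriv]
  ring

end PartialDeriv

local notation "∂ₓ" => partialDeriv (EuclideanSpace.single (0 : Fin 2) (1 : ℝ))
local notation "∂ᵧ" => partialDeriv (EuclideanSpace.single (1 : Fin 2) (1 : ℝ))

def realLap2 (g : P2 → ℝ) : P2 → ℝ := fun p => ∂ₓ (∂ₓ g) p + ∂ᵧ (∂ᵧ g) p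

section Plane

variable {g h u v k : P2 → ℝ} {p : P2}

theorem pdx_eq_partialDeriv (F : P2 → ℂ) : pdx F = ∂ₓ F := rfl

theorem pdy_eq_partialDeriv (F : P2 → ℂ) : pdy F = ∂ᵧ F := rfl

theorem lap2_ofReal (g : P2 → ℝ) (p : P2) :
    lap2 (fun x => (g x : ℂ)) p = realLap2 g p := by
  simp [lap2, realLap2, pdx_eq_partialDeriv, pdy_eq_partialDeriv, partialDeriv_ofReal]

theorem realLap2_mul (hg : ContDiffAt ℝ 2 g p) (hh : ContDiffAt ℝ 2 h p) :
    realLap2 (fun x => g x * h x) p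
      = realLap2 g p * h p + 2 * (∂ₓ g p * ∂ₓ h p + ∂ᵧ g p * ∂ᵧ h p) + g p * realLap2 h p := by
  simp only [realLap2, partialDeriv_partialDeriv_mul hg hh]
  ring

theorem beltrami_of_dzbar_ofReal_eq {c : ℝ}
    (h : dzbar (fun x => (u x : ℂ)) p = I * c * dzbar (fun x => (v x : ℂ)) p) :
    ∂ₓ u p = -(c * ∂ᵧ v p) ∧ ∂ᵧ u p = c * ∂ₓ v p := by
  simp only [dzbar, pdx_eq_partialDeriv, pdy_eq_partialDeriv, partialDeriv_ofReal, Complex.ext_iff,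
    div_ofNat_re, add_re, ofReal_re, mul_re, I_re, zero_mul, I_im, ofReal_im,
    mul_zero, sub_self, add_zero, mul_im, one_mul, zero_add, div_ofNat_im, add_im, zero_sub] at h
  constructor <;> linarith [h.1, h.2]

theorem mul_realLap2_eq_of_beltrami (hx : ∂ₓ u =ᶠ[𝓝 p] fun q => -(k q * ∂ᵧ v q))
    (hy : ∂ᵧ u =ᶠ[𝓝 p] fun q => k q * ∂ₓ v q) (hk : DifferentiableAt ℝ k p)
    (hv : ContDiffAt ℝ 2 v p) :
    k p * realLap2 u p = ∂ₓ k p * ∂ₓ u p + ∂ᵧ k p * ∂ᵧ u p := by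
  have hxx : ∂ₓ (∂ₓ u) p = -(∂ₓ k p * ∂ᵧ v p + k p * ∂ₓ (∂ᵧ v) p) := by
    rw [hx.partialDeriv_eq, partialDeriv_neg,
      partialDeriv_mul hk hv.differentiableAt_partialDeriv]
  have hyy : ∂ᵧ (∂ᵧ u) p = ∂ᵧ k p * ∂ₓ v p + k p * ∂ᵧ (∂ₓ v) p := by
    rw [hy.partialDeriv_eq, partialDeriv_mul hk hv.differentiableAt_partialDeriv]
  rw [realLap2, hxx, hyy, hx.eq_of_nhds, hy.eq_of_nhds, hv.partialDeriv_comm]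
  ring

theorem Vop_eq_zero_of_beltrami {f W₁ W₂ : P2 → ℝ} (hf : DifferentiableAt ℝ f p)
    (hW₁ : DifferentiableAt ℝ W₁ p) (hW₂ : DifferentiableAt ℝ W₂ p) (hfp : f p ≠ 0)
    (hx : ∂ₓ (fun x => f x * W₂ x) p = -(f p ^ 2 * ∂ᵧ (fun x => W₁ x / f x) p))
    (hy : ∂ᵧ (fun x => f x * W₂ x) p = f p ^ 2 * ∂ₓ (fun x => W₁ x / f x) p) :
    Vop (fun x => (f x : ℂ)) (fun x => (W₁ x : ℂ) + I * (W₂ x : ℂ)) p = 0 := by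
  rw [partialDeriv_mul hf hW₂, partialDeriv_div hW₁ hf hfp] at hx hy
  field_simp at hx hy
  have hxC : ((_ : ℝ) : ℂ) = _ := congrArg ofReal hx
  have hyC : ((_ : ℝ) : ℂ) = _ := congrArg ofReal hy
  push_cast at hxC hyC
  simp only [Vop, dzbar, pdx_eq_partialDeriv, pdy_eq_partialDeriv, partialDeriv_ofReal,
    partialDeriv_ofReal_add_I_mul hW₁ hW₂]
  rw [map_add, map_mul, conj_ofReal, conj_ofReal, conj_I]
  have hfpC : (f p : ℂ) ≠ 0 := ofReal_ne_zero.mpr hfp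
  field_simp
  linear_combination
    I * hxC - hyC + (((∂ᵧ W₂ p : ℝ) : ℂ) * f p + ((∂ᵧ f p : ℝ) : ℂ) * W₂ p) * I_sq

theorem schrodinger_of_mul_realLap2_mul_eq {f W : P2 → ℝ} (hf : ContDiffAt ℝ 2 f p)
    (hW : ContDiffAt ℝ 2 W p) (hfp : f p ≠ 0)
    (h : f p ^ 2 * realLap2 (fun x => f x * W x) p
      = ∂ₓ (fun x => f x ^ 2) p * ∂ₓ (fun x => f x * W x) p
        + ∂ᵧ (fun x => f x ^ 2) p * ∂ᵧ (fun x => f x * W x) p) :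
    -(lap2 (fun x => (W x : ℂ)) p)
      + (2 * ((pdx (fun x => (f x : ℂ)) p) ^ 2 + (pdy (fun x => (f x : ℂ)) p) ^ 2)
            / (f p : ℂ) ^ 2
          - lap2 (fun x => (f x : ℂ)) p / (f p : ℂ)) * (W p : ℂ) = 0 := by
  have hf1 := hf.differentiableAt two_ne_zero
  have hW1 := hW.differentiableAt two_ne_zero
  simp only [pow_two, partialDeriv_mul hf1 hf1, partialDeriv_mul hf1 hW1, realLap2_mul hf hW] at h
  simp only [lap2_ofReal, pdx_eq_partialDeriv, pdy_eq_partialDeriv, partialDeriv_ofReal]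
  have hreal : f p ^ 2 * realLap2 W p + f p * realLap2 f p * W p
      - 2 * (∂ₓ f p ^ 2 + ∂ᵧ f p ^ 2) * W p = 0 := by
    have hmul : f p * (f p ^ 2 * realLap2 W p + f p * realLap2 f p * W p
        - 2 * (∂ₓ f p ^ 2 + ∂ᵧ f p ^ 2) * W p) = 0 := by
      linear_combination h
    exact (mul_eq_zero.mp hmul).resolve_left hfp
  have hcomplex : ((_ : ℝ) : ℂ) = _ := congrArg ofReal hreal
  push_cast at hcomplex
  have hfpC : (f p : ℂ) ≠ 0 := ofReal_ne_zero.mpr hfp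
  field_simp
  linear_combination -hcomplex

end Plane

theorem statement2_general (Ω : Set P2) (hΩ : IsOpen Ω)
    (f : P2 → ℝ) (hf : ContDiffOn ℝ 2 f Ω) (hf0 : ∀ p ∈ Ω, f p ≠ 0)
    (W₁ W₂ : P2 → ℝ) (hW₁ : ContDiffOn ℝ 2 W₁ Ω) (hW₂ : ContDiffOn ℝ 2 W₂ Ω)
    (hConj : ∀ p ∈ Ω,
      dzbar (fun x => (f x : ℂ) * (W₂ x : ℂ)) p
        = Complex.I * (f p : ℂ) ^ 2 * dzbar (fun x => (W₁ x : ℂ) / (f x : ℂ)) p) :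
    ∀ p ∈ Ω,
      (Vop (fun x => (f x : ℂ)) (fun x => (W₁ x : ℂ) + Complex.I * (W₂ x : ℂ)) p = 0) ∧
      (-(lap2 (fun x => (W₂ x : ℂ)) p)
        + (2 * ((pdx (fun x => (f x : ℂ)) p) ^ 2 + (pdy (fun x => (f x : ℂ)) p) ^ 2)
              / (f p : ℂ) ^ 2
            - lap2 (fun x => (f x : ℂ)) p / (f p : ℂ)) * (W₂ p : ℂ) = 0) := by
  have hbeltrami : ∀ q ∈ Ω,
      ∂ₓ (fun x => f x * W₂ x) q = -(f q ^ 2 * ∂ᵧ (fun x => W₁ x / f x) q) ∧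
      ∂ᵧ (fun x => f x * W₂ x) q = f q ^ 2 * ∂ₓ (fun x => W₁ x / f x) q := fun q hq =>
    beltrami_of_dzbar_ofReal_eq (by push_cast; exact hConj q hq)
  intro p hp
  have hΩp : Ω ∈ 𝓝 p := hΩ.mem_nhds hp
  have hf2 := hf.contDiffAt hΩp
  have hW₂2 := hW₂.contDiffAt hΩp
  have hf1 := hf2.differentiableAt two_ne_zero
  refine ⟨Vop_eq_zero_of_beltrami hf1 ((hW₁.contDiffAt hΩp).differentiableAt two_ne_zero)
    (hW₂2.differentiableAt two_ne_zero) (hf0 p hp) (hbeltrami p hp).1 (hbeltrami p hp).2, ?_⟩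
  refine schrodinger_of_mul_realLap2_mul_eq hf2 hW₂2 (hf0 p hp) ?_
  exact mul_realLap2_eq_of_beltrami
    (eventually_of_mem hΩp fun q hq => (hbeltrami q hq).1)
    (eventually_of_mem hΩp fun q hq => (hbeltrami q hq).2) (hf1.pow 2)
    ((hW₁.div hf hf0).contDiffAt hΩp)

/-- conjugate "metaharmonic" construction: if W₁ solves (−Δ+q)W₁ = 0
    and W₂ satisfies ∂_z̄(fW₂) = i f² ∂_z̄(f⁻¹W₁), then W = W₁ + iW₂ solves VW = 0
    and W₂ solves (−Δ+r)W₂ = 0. -/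
theorem statement2 (Ω : Set P2) (hΩ : IsOpen Ω)
    (f : P2 → ℝ) (hf : ContDiffOn ℝ 2 f Ω) (hf0 : ∀ p ∈ Ω, f p ≠ 0)
    (W₁ W₂ : P2 → ℝ) (hW₁ : ContDiffOn ℝ 2 W₁ Ω) (hW₂ : ContDiffOn ℝ 2 W₂ Ω)
    (hSchr : ∀ p ∈ Ω,
      -(lap2 (fun x => (W₁ x : ℂ)) p)
        + (lap2 (fun x => (f x : ℂ)) p / (f p : ℂ)) * (W₁ p : ℂ) = 0)
    (hConj : ∀ p ∈ Ω,
      dzbar (fun x => (f x : ℂ) * (W₂ x : ℂ)) p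
        = Complex.I * (f p : ℂ) ^ 2 * dzbar (fun x => (W₁ x : ℂ) / (f x : ℂ)) p) :
    ∀ p ∈ Ω,
      (Vop (fun x => (f x : ℂ)) (fun x => (W₁ x : ℂ) + Complex.I * (W₂ x : ℂ)) p = 0) ∧
      (-(lap2 (fun x => (W₂ x : ℂ)) p)
        + (2 * ((pdx (fun x => (f x : ℂ)) p) ^ 2 + (pdy (fun x => (f x : ℂ)) p) ^ 2)
              / (f p : ℂ) ^ 2
            - lap2 (fun x => (f x : ℂ)) p / (f p : ℂ)) * (W₂ p : ℂ) = 0) :=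
  statement2_general Ω hΩ f hf hf0 W₁ W₂ hW₁ hW₂ hConj
end
end

section
/- Let f : Ω → ℂ be a nonvanishing scalar C² function on an open set Ω ⊆ ℝ³ and set q = Δf/f. Then for every scalar (complex-valued) C² function φ on Ω one has (D + M^{Df/f})((D − (Df/f)C_H)φ) = (−Δ + q)φ, i.e. D(Dφ − (Df/f)φ) + (Dφ − (Df/f)φ)·(Df/f) = −Δφ + qφ. -/
open Quaternion

noncomputable section

/-- Points of ℝ³. -/
abbrev P3 := EuclideanSpace ℝ (Fin 3)

/-- Partial derivative ∂ₖ of a complex-valued function on ℝ³. -/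
def pd (k : Fin 3) (F : P3 → ℂ) : P3 → ℂ :=
  fun p => fderiv ℝ F p (EuclideanSpace.single k 1)

/-- The Laplacian Δ = ∂₁² + ∂₂² + ∂₃². -/
def lap3 (F : P3 → ℂ) : P3 → ℂ := fun p => ∑ k : Fin 3, pd k (pd k F) p

/-- Embedding of a complex scalar as a quaternion. -/
def qC (z : ℂ) : ℍ[ℂ] := ⟨z, 0, 0, 0⟩

/-- The quaternionic imaginary units e₁, e₂, e₃. -/
def qe : Fin 3 → ℍ[ℂ] := ![⟨0,1,0,0⟩, ⟨0,0,1,0⟩, ⟨0,0,0,1⟩]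

/-- The eₖ-components of a quaternion. -/
def qcomp : Fin 3 → ℍ[ℂ] → ℂ := ![QuaternionAlgebra.imI, QuaternionAlgebra.imJ, QuaternionAlgebra.imK]

/-- Quaternionic conjugation C_H. -/
def CH (q : ℍ[ℂ]) : ℍ[ℂ] := ⟨q.re, -q.imI, -q.imJ, -q.imK⟩

/-- Componentwise partial derivative of a quaternion-valued function. -/
def pdq (k : Fin 3) (W : P3 → ℍ[ℂ]) : P3 → ℍ[ℂ] :=
  fun p => ⟨pd k (fun x => (W x).re) p, pd k (fun x => (W x).imI) p,
            pd k (fun x => (W x).imJ) p, pd k (fun x => (W x).imK) p⟩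

/-- The Dirac (Moisil–Theodorescu) operator D Q = Σₖ eₖ ∂ₖ Q. -/
def Dq (W : P3 → ℍ[ℂ]) : P3 → ℍ[ℂ] := fun p => ∑ k : Fin 3, qe k * pdq k W p

/-- The right Dirac operator Dᵣ Q = Σₖ (∂ₖ Q) eₖ. -/
def Drq (W : P3 → ℍ[ℂ]) : P3 → ℍ[ℂ] := fun p => ∑ k : Fin 3, pdq k W p * qe k

/-- Gradient of a scalar function viewed as a purely vectorial quaternion. -/
def gradq (F : P3 → ℂ) : P3 → ℍ[ℂ] := fun p => ⟨0, pd 0 F p, pd 1 F p, pd 2 F p⟩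

/-- Divergence of (the vector part of) a quaternion-valued function. -/
def divq (W : P3 → ℍ[ℂ]) : P3 → ℂ :=
  fun p => pd 0 (fun x => (W x).imI) p + pd 1 (fun x => (W x).imJ) p + pd 2 (fun x => (W x).imK) p

/-- Rotor (curl) of (the vector part of) a quaternion-valued function. -/
def rotq (W : P3 → ℍ[ℂ]) : P3 → ℍ[ℂ] :=
  fun p => ⟨0,
    pd 1 (fun x => (W x).imK) p - pd 2 (fun x => (W x).imJ) p,
    pd 2 (fun x => (W x).imI) p - pd 0 (fun x => (W x).imK) p,
    pd 0 (fun x => (W x).imJ) p - pd 1 (fun x => (W x).imI) p⟩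

/-- Cross product of the vector parts of two quaternions. -/
def crossq (u v : ℍ[ℂ]) : ℍ[ℂ] :=
  ⟨0, u.imJ * v.imK - u.imK * v.imJ, u.imK * v.imI - u.imI * v.imK, u.imI * v.imJ - u.imJ * v.imI⟩

/-- Bilinear scalar product of the vector parts of two quaternions. -/
def dotq (u v : ℍ[ℂ]) : ℂ := u.imI * v.imI + u.imJ * v.imJ + u.imK * v.imK

/-- `Cⁿ` smoothness of a quaternion-valued function on a set, componentwise. -/
def QContDiffOn (n : ℕ) (W : P3 → ℍ[ℂ]) (Ω : Set P3) : Prop :=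
  ContDiffOn ℝ n (fun p => (W p).re) Ω ∧ ContDiffOn ℝ n (fun p => (W p).imI) Ω ∧
  ContDiffOn ℝ n (fun p => (W p).imJ) Ω ∧ ContDiffOn ℝ n (fun p => (W p).imK) Ω

/-- The pure-quaternion Df/f built from a nonvanishing scalar function f. -/
def DfF (f : P3 → ℂ) : P3 → ℍ[ℂ] := fun p => (f p)⁻¹ • gradq f p

/-! For pure vectors `W`, `g` the quaternionic product splits as `W g = -(W·g) + W × g`, and
`D W = -div W + rot W`, so `D W + W g = -(div W + W·g) + (rot W + W × g)`. Take `g = ∇f/f`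
and `W = ∇φ - φ g`. Since `g` is a logarithmic gradient, `rot g = 0` and
`div g = Δf/f - g·g`. By the product rules, `rot W = -∇φ × g`, which cancels
`W × g = ∇φ × g`, and `div W + W·g = Δφ - φ (div g + g·g) = Δφ - (Δf/f) φ`. -/

section PartialDerivatives

variable {a b : P3 → ℂ} {p : P3}

lemma pd_sub (ha : DifferentiableAt ℝ a p) (hb : DifferentiableAt ℝ b p) (k : Fin 3) :
    pd k (fun x => a x - b x) p = pd k a p - pd k b p := by
  simp [pd, fderiv_fun_sub ha hb]

lemma pd_mul (ha : DifferentiableAt ℝ a p) (hb : DifferentiableAt ℝ b p) (k : Fin 3) :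
    pd k (fun x => a x * b x) p = pd k a p * b p + a p * pd k b p := by
  simp only [pd, fderiv_fun_mul ha hb, add_apply, smul_apply, smul_eq_mul]
  ring

lemma pd_inv (ha : DifferentiableAt ℝ a p) (h0 : a p ≠ 0) (k : Fin 3) :
    pd k (fun x => (a x)⁻¹) p = -((a p)⁻¹ ^ 2 * pd k a p) := by
  have h : HasFDerivAt (fun x => (a x)⁻¹)
      ((-ContinuousLinearMap.mulLeftRight ℝ ℂ (a p)⁻¹ (a p)⁻¹).comp (fderiv ℝ a p)) p :=
    (hasFDerivAt_inv' h0).comp p ha.hasFDerivAt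
  simp only [pd, h.fderiv, ContinuousLinearMap.comp_apply, neg_apply,
    ContinuousLinearMap.mulLeftRight_apply]
  ring

lemma pd_apply_fderiv (hF : DifferentiableAt ℝ (fderiv ℝ a) p) (j k : Fin 3) :
    pd k (pd j a) p
      = fderiv ℝ (fderiv ℝ a) p (EuclideanSpace.single k 1) (EuclideanSpace.single j 1) := by
  have h : HasFDerivAt (pd j a)
      ((ContinuousLinearMap.apply ℝ ℂ (EuclideanSpace.single j (1 : ℝ))).comp
        (fderiv ℝ (fderiv ℝ a) p)) p :=
    ((ContinuousLinearMap.apply ℝ ℂ (EuclideanSpace.single j (1 : ℝ))).hasFDerivAt.comp p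
      hF.hasFDerivAt :)
  rw [pd, h.fderiv]
  rfl

lemma differentiableAt_fderiv_of_contDiffAt_two (ha : ContDiffAt ℝ 2 a p) :
    DifferentiableAt ℝ (fderiv ℝ a) p :=
  (ha.fderiv_right (m := 1) (by norm_num)).differentiableAt one_ne_zero

lemma differentiableAt_pd (ha : ContDiffAt ℝ 2 a p) (j : Fin 3) :
    DifferentiableAt ℝ (pd j a) p :=
  ((ContinuousLinearMap.apply ℝ ℂ (EuclideanSpace.single j (1 : ℝ))).differentiableAt.comp p
    (differentiableAt_fderiv_of_contDiffAt_two ha) :)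

lemma pd_comm (ha : ContDiffAt ℝ 2 a p) (j k : Fin 3) :
    pd k (pd j a) p = pd j (pd k a) p := by
  have hd := differentiableAt_fderiv_of_contDiffAt_two ha
  rw [pd_apply_fderiv hd, pd_apply_fderiv hd]
  exact (ha.isSymmSndFDerivAt (by simp)).eq _ _

end PartialDerivatives

section VectorCalculus

def VecDifferentiableAt (V : P3 → ℍ[ℂ]) (p : P3) : Prop :=
  DifferentiableAt ℝ (fun x => (V x).imI) p ∧ DifferentiableAt ℝ (fun x => (V x).imJ) p ∧
    DifferentiableAt ℝ (fun x => (V x).imK) p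

variable {a F : P3 → ℂ} {V U : P3 → ℍ[ℂ]} {p : P3}

lemma VecDifferentiableAt.sub (hV : VecDifferentiableAt V p) (hU : VecDifferentiableAt U p) :
    VecDifferentiableAt (fun x => V x - U x) p :=
  ⟨hV.1.sub hU.1, hV.2.1.sub hU.2.1, hV.2.2.sub hU.2.2⟩

lemma VecDifferentiableAt.smul (ha : DifferentiableAt ℝ a p) (hV : VecDifferentiableAt V p) :
    VecDifferentiableAt (fun x => a x • V x) p :=
  ⟨ha.mul hV.1, ha.mul hV.2.1, ha.mul hV.2.2⟩

lemma vecDifferentiableAt_gradq (hF : ContDiffAt ℝ 2 F p) : VecDifferentiableAt (gradq F) p :=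
  ⟨differentiableAt_pd hF 0, differentiableAt_pd hF 1, differentiableAt_pd hF 2⟩

lemma re_gradq (F : P3 → ℂ) (x : P3) : (gradq F x).re = 0 := rfl

lemma gradq_const (c : ℂ) (x : P3) : gradq (fun _ => c) x = 0 := by
  apply Quaternion.ext <;> simp [gradq, pd]

lemma divq_sub (hV : VecDifferentiableAt V p) (hU : VecDifferentiableAt U p) :
    divq (fun x => V x - U x) p = divq V p - divq U p := by
  obtain ⟨hV₁, hV₂, hV₃⟩ := hV
  obtain ⟨hU₁, hU₂, hU₃⟩ := hU
  simp only [divq, Quaternion.imI_sub, Quaternion.imJ_sub, Quaternion.imK_sub,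
    pd_sub hV₁ hU₁, pd_sub hV₂ hU₂, pd_sub hV₃ hU₃]
  ring

lemma rotq_sub (hV : VecDifferentiableAt V p) (hU : VecDifferentiableAt U p) :
    rotq (fun x => V x - U x) p = rotq V p - rotq U p := by
  obtain ⟨hV₁, hV₂, hV₃⟩ := hV
  obtain ⟨hU₁, hU₂, hU₃⟩ := hU
  apply Quaternion.ext <;>
    simp only [Quaternion.re_sub, Quaternion.imI_sub, Quaternion.imJ_sub, Quaternion.imK_sub] <;>
    simp only [rotq, Quaternion.imI_sub, Quaternion.imJ_sub, Quaternion.imK_sub,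
      pd_sub hV₁ hU₁, pd_sub hV₂ hU₂, pd_sub hV₃ hU₃] <;>
    ring

lemma divq_smul (ha : DifferentiableAt ℝ a p) (hV : VecDifferentiableAt V p) :
    divq (fun x => a x • V x) p = dotq (gradq a p) (V p) + a p * divq V p := by
  obtain ⟨hV₁, hV₂, hV₃⟩ := hV
  simp only [divq, dotq, gradq, Quaternion.imI_smul, Quaternion.imJ_smul, Quaternion.imK_smul,
    smul_eq_mul, pd_mul ha hV₁, pd_mul ha hV₂, pd_mul ha hV₃]
  ring

lemma rotq_smul (ha : DifferentiableAt ℝ a p) (hV : VecDifferentiableAt V p) :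
    rotq (fun x => a x • V x) p = crossq (gradq a p) (V p) + a p • rotq V p := by
  obtain ⟨hV₁, hV₂, hV₃⟩ := hV
  apply Quaternion.ext <;>
    simp only [Quaternion.re_add, Quaternion.imI_add, Quaternion.imJ_add, Quaternion.imK_add,
      Quaternion.re_smul, Quaternion.imI_smul, Quaternion.imJ_smul, Quaternion.imK_smul] <;>
    simp only [rotq, crossq, gradq, Quaternion.imI_smul, Quaternion.imJ_smul,
      Quaternion.imK_smul, smul_eq_mul, pd_mul ha hV₁, pd_mul ha hV₂, pd_mul ha hV₃] <;>
    ring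

lemma divq_gradq (F : P3 → ℂ) : divq (gradq F) = lap3 F := by
  ext p
  simp [divq, lap3, gradq, Fin.sum_univ_three]

lemma rotq_gradq (hF : ContDiffAt ℝ 2 F p) : rotq (gradq F) p = 0 := by
  apply Quaternion.ext <;> simp [rotq, gradq, pd_comm hF 1 2, pd_comm hF 2 0, pd_comm hF 0 1]

lemma gradq_inv (ha : DifferentiableAt ℝ a p) (h0 : a p ≠ 0) :
    gradq (fun x => (a x)⁻¹) p = -(a p)⁻¹ ^ 2 • gradq a p := by
  apply Quaternion.ext <;>
    simp only [Quaternion.re_smul, Quaternion.imI_smul, Quaternion.imJ_smul,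
      Quaternion.imK_smul] <;>
    simp [gradq, pd_inv ha h0]

end VectorCalculus

section QuaternionAlgebra

lemma qC_add (a b : ℂ) : qC (a + b) = qC a + qC b := by
  apply Quaternion.ext <;>
    simp only [Quaternion.re_add, Quaternion.imI_add, Quaternion.imJ_add, Quaternion.imK_add] <;>
    simp [qC]

lemma mul_eq_of_re_eq_zero {u v : ℍ[ℂ]} (hu : u.re = 0) (hv : v.re = 0) :
    u * v = qC (-dotq u v) + crossq u v := by
  apply Quaternion.ext <;>
    simp only [Quaternion.re_add, Quaternion.imI_add, Quaternion.imJ_add, Quaternion.imK_add,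
      Quaternion.re_mul, Quaternion.imI_mul, Quaternion.imJ_mul, Quaternion.imK_mul] <;>
    simp only [qC, dotq, crossq, hu, hv] <;>
    ring

lemma dotq_sub_left (u v w : ℍ[ℂ]) : dotq (u - v) w = dotq u w - dotq v w := by
  simp only [dotq, Quaternion.imI_sub, Quaternion.imJ_sub, Quaternion.imK_sub]
  ring

lemma dotq_smul_left (c : ℂ) (u v : ℍ[ℂ]) : dotq (c • u) v = c * dotq u v := by
  simp only [dotq, Quaternion.imI_smul, Quaternion.imJ_smul, Quaternion.imK_smul, smul_eq_mul]
  ring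

lemma crossq_sub_left (u v w : ℍ[ℂ]) : crossq (u - v) w = crossq u w - crossq v w := by
  apply Quaternion.ext <;>
    simp only [Quaternion.re_sub, Quaternion.imI_sub, Quaternion.imJ_sub, Quaternion.imK_sub] <;>
    simp only [crossq, Quaternion.imI_sub, Quaternion.imJ_sub, Quaternion.imK_sub] <;>
    ring

lemma crossq_smul_left (c : ℂ) (u v : ℍ[ℂ]) : crossq (c • u) v = c • crossq u v := by
  apply Quaternion.ext <;>
    simp only [Quaternion.re_smul, Quaternion.imI_smul, Quaternion.imJ_smul,
      Quaternion.imK_smul] <;>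
    simp only [crossq, Quaternion.imI_smul, Quaternion.imJ_smul, Quaternion.imK_smul,
      smul_eq_mul] <;>
    ring

lemma crossq_self (u : ℍ[ℂ]) : crossq u u = 0 := by
  apply Quaternion.ext <;>
    simp only [crossq, Quaternion.re_zero, Quaternion.imI_zero, Quaternion.imJ_zero,
      Quaternion.imK_zero] <;>
    ring

lemma Dq_eq (W : P3 → ℍ[ℂ]) (p : P3) :
    Dq W p = qC (-divq W p) + gradq (fun x => (W x).re) p + rotq W p := by
  apply Quaternion.ext <;>
    simp only [Dq, Fin.sum_univ_three, Quaternion.re_add, Quaternion.imI_add, Quaternion.imJ_add,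
      Quaternion.imK_add, Quaternion.re_mul, Quaternion.imI_mul, Quaternion.imJ_mul,
      Quaternion.imK_mul] <;>
    simp only [qe, Matrix.cons_val, pdq, qC, divq, gradq, rotq] <;>
    ring

lemma Dq_add_mul_of_re_eq_zero {W : P3 → ℍ[ℂ]} {g : ℍ[ℂ]} (hW : ∀ x, (W x).re = 0)
    (hg : g.re = 0) (p : P3) :
    Dq W p + W p * g = qC (-(divq W p + dotq (W p) g)) + (rotq W p + crossq (W p) g) := by
  have hgrad : gradq (fun x => (W x).re) p = 0 := by
    simp only [hW]
    exact gradq_const 0 p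
  rw [Dq_eq, mul_eq_of_re_eq_zero (hW p) hg, hgrad, add_zero, neg_add, qC_add]
  abel

end QuaternionAlgebra

section LogarithmicGradient

variable {f : P3 → ℂ} {p : P3}

lemma vecDifferentiableAt_DfF (hf : ContDiffAt ℝ 2 f p) (h0 : f p ≠ 0) :
    VecDifferentiableAt (DfF f) p :=
  VecDifferentiableAt.smul ((hf.differentiableAt two_ne_zero).inv h0)
    (vecDifferentiableAt_gradq hf)

lemma re_DfF (x : P3) : (DfF f x).re = 0 := by
  simp only [DfF, Quaternion.re_smul, re_gradq, smul_zero]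

lemma divq_DfF (hf : ContDiffAt ℝ 2 f p) (h0 : f p ≠ 0) :
    divq (DfF f) p = lap3 f p / f p - dotq (DfF f p) (DfF f p) := by
  have hfd := hf.differentiableAt two_ne_zero
  change divq (fun x => (f x)⁻¹ • gradq f x) p = _
  rw [divq_smul (a := fun x => (f x)⁻¹) (hfd.inv h0) (vecDifferentiableAt_gradq hf),
    gradq_inv hfd h0, divq_gradq]
  simp only [DfF, dotq, Quaternion.imI_smul, Quaternion.imJ_smul, Quaternion.imK_smul, smul_eq_mul]
  ring

lemma rotq_DfF (hf : ContDiffAt ℝ 2 f p) (h0 : f p ≠ 0) : rotq (DfF f) p = 0 := by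
  have hfd := hf.differentiableAt two_ne_zero
  change rotq (fun x => (f x)⁻¹ • gradq f x) p = 0
  rw [rotq_smul (a := fun x => (f x)⁻¹) (hfd.inv h0) (vecDifferentiableAt_gradq hf),
    gradq_inv hfd h0, rotq_gradq hf, smul_zero, add_zero, crossq_smul_left, crossq_self, smul_zero]

end LogarithmicGradient

/-- spatial factorization of the Schrödinger operator on scalars:
    (D + Mᴰᶠ/ᶠ)((D − (Df/f)C_H)φ) = (−Δ + q)φ with q = Δf/f. -/
theorem statement5 (Ω : Set P3) (hΩ : IsOpen Ω)
    (f : P3 → ℂ) (hf : ContDiffOn ℝ 2 f Ω) (hf0 : ∀ p ∈ Ω, f p ≠ 0)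
    (φ : P3 → ℂ) (hφ : ContDiffOn ℝ 2 φ Ω) :
    ∀ p ∈ Ω,
      Dq (fun x => gradq φ x - φ x • DfF f x) p
          + (gradq φ p - φ p • DfF f p) * DfF f p
        = qC (-(lap3 φ p) + (lap3 f p / f p) * φ p) := by
  intro p hp
  have hfp : ContDiffAt ℝ 2 f p := (hf p hp).contDiffAt (hΩ.mem_nhds hp)
  have hφp : ContDiffAt ℝ 2 φ p := (hφ p hp).contDiffAt (hΩ.mem_nhds hp)
  have h0 := hf0 p hp
  have hre : ∀ x, (gradq φ x - φ x • DfF f x).re = 0 := fun x => by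
    simp only [Quaternion.re_sub, Quaternion.re_smul, re_gradq, re_DfF, smul_zero, sub_zero]
  have hφd := hφp.differentiableAt two_ne_zero
  have hgradφ := vecDifferentiableAt_gradq hφp
  have hg := vecDifferentiableAt_DfF hfp h0
  have hφg := VecDifferentiableAt.smul hφd hg
  have hdiv : divq (fun x => gradq φ x - φ x • DfF f x) p
      + dotq (gradq φ p - φ p • DfF f p) (DfF f p) = lap3 φ p - lap3 f p / f p * φ p := by
    rw [divq_sub hgradφ hφg, divq_smul hφd hg, divq_gradq, divq_DfF hfp h0, dotq_sub_left,
      dotq_smul_left]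
    ring
  have hrot : rotq (fun x => gradq φ x - φ x • DfF f x) p
      + crossq (gradq φ p - φ p • DfF f p) (DfF f p) = 0 := by
    rw [rotq_sub hgradφ hφg, rotq_smul hφd hg, rotq_gradq hφp, rotq_DfF hfp h0, crossq_sub_left,
      crossq_smul_left, crossq_self, smul_zero, add_zero, sub_zero, zero_sub,
      neg_add_cancel]
  rw [Dq_add_mul_of_re_eq_zero hre (re_DfF p), hdiv, hrot, add_zero]
  congr 1
  ring
end
end

section
/- Let f : Ω → ℂ be a nonvanishing scalar C¹ function on an open set Ω ⊆ ℝ³. If W : Ω → ℍ(ℂ) is a C¹ solution of the main Vekua equation VW = 0, then its derivative Ẇ = V̄W is purely vectorial, i.e. Sc(V̄W) = 0 on Ω. -/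
open Quaternion

noncomputable section

/-! The scalar part of a product of quaternions does not depend on the order of the factors, so
`Sc(V̄W) = Sc(VW)` termwise: `Sc((∂ₖW) eₖ) = Sc(eₖ ∂ₖW)` and `Sc(C_H W · Df/f) = Sc(Df/f · C_H W)`. -/

theorem Quaternion.re_mul_comm {R : Type*} [CommRing R] (a b : ℍ[R]) :
    (a * b).re = (b * a).re := by
  simp only [Quaternion.re_mul]
  ring

theorem re_Drq_eq_re_Dq (W : P3 → ℍ[ℂ]) (p : P3) : (Drq W p).re = (Dq W p).re := by
  simp only [Drq, Dq, Fin.sum_univ_three, Quaternion.re_add, Quaternion.re_mul_comm (pdq _ W p)]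

theorem re_rightVekua_eq_re_vekua (f : P3 → ℂ) (W : P3 → ℍ[ℂ]) (p : P3) :
    (Drq W p - CH (W p) * DfF f p).re = (Dq W p - DfF f p * CH (W p)).re := by
  rw [Quaternion.re_sub, Quaternion.re_sub, re_Drq_eq_re_Dq, Quaternion.re_mul_comm]

theorem statement10_general (Ω : Set P3)
    (f : P3 → ℂ)
    (W : P3 → ℍ[ℂ])
    (hVek : ∀ p ∈ Ω, Dq W p - DfF f p * CH (W p) = 0) :
    ∀ p ∈ Ω, (Drq W p - CH (W p) * DfF f p).re = 0 := by
  intro p hp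
  rw [re_rightVekua_eq_re_vekua, hVek p hp, Quaternion.re_zero]

/-- the derivative Ẇ = V̄W of a solution of VW = 0 is purely
    vectorial: Sc(V̄W) = 0. -/
theorem statement10 (Ω : Set P3) (hΩ : IsOpen Ω)
    (f : P3 → ℂ) (hf : ContDiffOn ℝ 1 f Ω) (hf0 : ∀ p ∈ Ω, f p ≠ 0)
    (W : P3 → ℍ[ℂ]) (hW : QContDiffOn 1 W Ω)
    (hVek : ∀ p ∈ Ω, Dq W p - DfF f p * CH (W p) = 0) :
    ∀ p ∈ Ω, (Drq W p - CH (W p) * DfF f p).re = 0 :=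
  statement10_general Ω f W hVek
end
end
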